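/- Let n ≥ 2, 1 < p, p̄₁, p̄₂ < ∞, and r > 0. For f₀ = χ_{B(0,r)}, the characteristic function of the ball of radius r centered at the origin in ℝⁿ, one has the equality ‖H f₀‖_{wL^p_{|x|}L^{p̄₂}_θ} = ω_n^{1/p̄₂ - 1/p̄₁} · ‖f₀‖_{L^p_{|x|}L^{p̄₁}_θ}; in particular the constant ω_n^{1/p̄₂ - 1/p̄₁} in the weak-type estimate for H is sharp. -/

import Mathlib

open MeasureTheory Metric Set

noncomputable section

/-- Euclidean space ℝⁿ. -/
abbrev Euc (n : ℕ) := EuclideanSpace ℝ (Fin n)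

/-- Volume of the unit ball in ℝⁿ: Ω_n = π^(n/2) / Γ(1 + n/2). -/
def ballVol (n : ℕ) : ℝ := Real.pi ^ ((n : ℝ) / 2) / Real.Gamma (1 + (n : ℝ) / 2)

/-- Surface measure of the unit sphere S^{n-1}: ω_n = 2π^(n/2) / Γ(n/2). -/
def sphArea (n : ℕ) : ℝ := 2 * Real.pi ^ ((n : ℝ) / 2) / Real.Gamma ((n : ℝ) / 2)

/-- The surface measure dθ on the unit sphere S^{n-1} ⊂ ℝⁿ (total mass ω_n = n·Ω_n). -/
def sphereMeasure (n : ℕ) : Measure (sphere (0 : Euc n) 1) :=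
  (volume : Measure (Euc n)).toSphere

/-- Mixed radial-angular norm
‖f‖ = (∫₀^∞ (∫_{S^{n-1}} |f(rθ)|^{p̄} dθ)^{p/p̄} r^{n-1} dr)^{1/p}. -/
def mixedNorm (n : ℕ) (p pb : ℝ) (f : Euc n → ℝ) : ℝ :=
  (∫ r in Ioi (0 : ℝ),
      (∫ θ, |f (r • (θ : Euc n))| ^ pb ∂(sphereMeasure n)) ^ (p / pb) * r ^ ((n : ℝ) - 1)) ^ (1 / p)

/-- Weak mixed radial-angular norm: sup_{λ>0} λ‖χ_{|f|>λ}‖. -/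
def wMixedNorm (n : ℕ) (p pb : ℝ) (f : Euc n → ℝ) : ℝ :=
  ⨆ l : {l : ℝ // 0 < l},
    l.1 * mixedNorm n p pb (indicator {x | l.1 < |f x|} fun _ => (1 : ℝ))

/-- n-dimensional Hardy operator H f(x) = (Ω_n |x|ⁿ)⁻¹ ∫_{|y|<|x|} f(y) dy. -/
def hardyOp (n : ℕ) (f : Euc n → ℝ) (x : Euc n) : ℝ :=
  (ballVol n * ‖x‖ ^ n)⁻¹ * ∫ y in {y : Euc n | ‖y‖ < ‖x‖}, f y

/-- Dual Hardy operator H* f(x) = ∫_{|y|≥|x|} f(y)/(Ω_n |y|ⁿ) dy. -/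
def dualHardyOp (n : ℕ) (f : Euc n → ℝ) (x : Euc n) : ℝ :=
  ∫ y in {y : Euc n | ‖x‖ ≤ ‖y‖}, f y / (ballVol n * ‖y‖ ^ n)

/-- Fractional Hardy operator H_β f(x) = (Ω_n^{1/n}|x|)^{β-n} ∫_{|y|<|x|} f(y) dy. -/
def fracHardyOp (n : ℕ) (β : ℝ) (f : Euc n → ℝ) (x : Euc n) : ℝ :=
  (ballVol n ^ ((1 : ℝ) / n) * ‖x‖) ^ (-((n : ℝ) - β)) * ∫ y in {y : Euc n | ‖y‖ < ‖x‖}, f y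

/-- L^p norm on ℝⁿ. -/
def lpNorm (n : ℕ) (p : ℝ) (f : Euc n → ℝ) : ℝ := (∫ x : Euc n, |f x| ^ p) ^ (1 / p)

/-- Beta function B(a,b) = ∫₀¹ t^{a-1}(1-t)^{b-1} dt. -/
def betaFn (a b : ℝ) : ℝ := ∫ t in (0 : ℝ)..1, t ^ (a - 1) * (1 - t) ^ (b - 1)

/-- Sharp constant C_{p,q,n,β} = (p'/q)^{1/q}((n/(qβ))·B(n/(qβ), n/(q'β)))^{-β/n}. -/
def fracHardyConst (p q : ℝ) (n : ℕ) (β : ℝ) : ℝ :=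
  (p / (p - 1) / q) ^ (1 / q) *
    ((n / (q * β)) * betaFn ((n : ℝ) / (q * β)) ((n : ℝ) / ((q / (q - 1)) * β))) ^ (-(β / (n : ℝ)))


/-!
For `x ≠ 0`, `H χ_{B(0,r)}(x) = min(|x|, r)ⁿ / |x|ⁿ ≤ 1`, so for `0 < λ < 1` the superlevel set
`{|H χ_{B(0,r)}| > λ}` is, up to the origin, the ball of radius `r λ^{-1/n}`, and for `λ ≥ 1` it is
empty. The mixed norm of the indicator of `B(0,R)` is `ω_n^{1/p̄} (Rⁿ/n)^{1/p}`, so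
`λ ‖χ_{|H χ_{B(0,r)}| > λ}‖ = λ^{1-1/p} ‖χ_{B(0,r)}‖`, whose supremum `‖χ_{B(0,r)}‖` is approached
as `λ → 1⁻`. Changing the angular exponent of the indicator of a ball multiplies its norm by a power
of `ω_n`, which gives the equality; testing a weak-type bound on `χ_{B(0,r)}` gives sharpness.
-/

open Filter Topology

lemma ciSup_pos_eq_of_tendsto_nhdsLT_one {g : ℝ → ℝ} {K : ℝ} (hle : ∀ l, 0 < l → g l ≤ K)
    (hlim : Tendsto g (𝓝[<] 1) (𝓝 K)) : ⨆ l : {l : ℝ // 0 < l}, g l = K := by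
  have : Nonempty {l : ℝ // 0 < l} := ⟨⟨1, one_pos⟩⟩
  have hbdd : BddAbove (range fun l : {l : ℝ // 0 < l} => g l) :=
    ⟨K, forall_mem_range.2 fun l => hle l l.2⟩
  refine le_antisymm (ciSup_le fun l => hle l l.2) (le_of_tendsto hlim ?_)
  filter_upwards [Ioo_mem_nhdsLT one_pos] with l hl
  exact le_ciSup hbdd ⟨l, hl.1⟩

lemma ballVol_pos (n : ℕ) : 0 < ballVol n :=
  div_pos (Real.rpow_pos_of_pos Real.pi_pos _) (Real.Gamma_pos_of_pos (by positivity))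

lemma mixedNorm_congr {n : ℕ} {p pb : ℝ} {f g : Euc n → ℝ} (h : ∀ x, x ≠ 0 → f x = g x) :
    mixedNorm n p pb f = mixedNorm n p pb g := by
  unfold mixedNorm
  refine congrArg (· ^ (1 / p)) (setIntegral_congr_fun measurableSet_Ioi fun s hs => ?_)
  simp only [h _ (smul_ne_zero (mem_Ioi.1 hs).ne' (ne_zero_of_mem_unit_sphere _))]

lemma hardyOp_zero (n : ℕ) (f : Euc n → ℝ) : hardyOp n f 0 = 0 := by
  simp [hardyOp, (norm_nonneg _).not_gt]

section Ball

variable {n : ℕ} [NeZero n]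

lemma sphArea_pos : 0 < sphArea n :=
  div_pos (by positivity) (Real.Gamma_pos_of_pos (half_pos (Nat.cast_pos.2 (NeZero.pos n))))

lemma measureReal_ball_zero {R : ℝ} (hR : 0 ≤ R) :
    volume.real (ball (0 : Euc n) R) = ballVol n * R ^ n := by
  have hc : Real.sqrt Real.pi ^ n / Real.Gamma (n / 2 + 1) = ballVol n := by
    rw [ballVol, Real.sqrt_eq_rpow, ← Real.rpow_natCast, ← Real.rpow_mul Real.pi_pos.le, add_comm]
    ring_nf
  rw [measureReal_def, EuclideanSpace.volume_ball, Fintype.card_fin, hc, ← ENNReal.ofReal_pow hR,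
    ← ENNReal.ofReal_mul (pow_nonneg hR n), ENNReal.toReal_ofReal (by positivity [ballVol_pos n]),
    mul_comm]

lemma sphereMeasure_real_univ : (sphereMeasure n).real univ = sphArea n := by
  have hn : (0 : ℝ) < n := Nat.cast_pos.2 (NeZero.pos n)
  have hΓ : Real.Gamma (1 + n / 2) = n / 2 * Real.Gamma (n / 2) := by
    rw [add_comm, Real.Gamma_add_one (by positivity)]
  have hΓ₀ : Real.Gamma (n / 2) ≠ 0 := (Real.Gamma_pos_of_pos (by positivity)).ne'
  rw [measureReal_def, sphereMeasure, Measure.toSphere_apply_univ, ENNReal.toReal_mul,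
    ENNReal.toReal_natCast, finrank_euclideanSpace, Fintype.card_fin, ← measureReal_def,
    measureReal_ball_zero zero_le_one, one_pow, mul_one, ballVol, sphArea, hΓ]
  field_simp

lemma integral_sphereMeasure_indicator_ball {pb : ℝ} (hpb : pb ≠ 0) {R s : ℝ} (hs : 0 < s) :
    ∫ θ, |(ball (0 : Euc n) R).indicator (fun _ => (1 : ℝ)) (s • (θ : Euc n))| ^ pb
        ∂(sphereMeasure n) = (Iio R).indicator (fun _ => sphArea n) s := by
  have hmem : ∀ θ : sphere (0 : Euc n) 1, s • (θ : Euc n) ∈ ball 0 R ↔ s ∈ Iio R := fun θ => by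
    rw [mem_ball_zero_iff, norm_smul, mem_sphere_zero_iff_norm.1 θ.2, mul_one,
      Real.norm_of_nonneg hs.le, mem_Iio]
  by_cases hsR : s ∈ Iio R
  · simp [indicator_of_mem ((hmem _).2 hsR), indicator_of_mem hsR, sphereMeasure_real_univ]
  · simp [indicator_of_notMem (mt (hmem _).1 hsR), indicator_of_notMem hsR, Real.zero_rpow hpb]

lemma mixedNorm_indicator_ball {p pb : ℝ} (hp : p ≠ 0) (hpb : pb ≠ 0) {R : ℝ} (hR : 0 ≤ R) :
    mixedNorm n p pb ((ball (0 : Euc n) R).indicator fun _ => 1)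
      = sphArea n ^ (1 / pb) * (R ^ n / n) ^ (1 / p) := by
  have hn : (0 : ℝ) < n := Nat.cast_pos.2 (NeZero.pos n)
  have hω := (sphArea_pos (n := n)).le
  have radial : ∀ s ∈ Ioi (0 : ℝ),
      (∫ θ, |(ball (0 : Euc n) R).indicator (fun _ => (1 : ℝ)) (s • (θ : Euc n))| ^ pb
          ∂(sphereMeasure n)) ^ (p / pb) * s ^ ((n : ℝ) - 1)
        = (Ioo 0 R).indicator (fun s => sphArea n ^ (p / pb) * s ^ ((n : ℝ) - 1)) s := by
    intro s hs
    rw [integral_sphereMeasure_indicator_ball hpb hs]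
    by_cases hsR : s < R
    · rw [indicator_of_mem (mem_Iio.2 hsR), indicator_of_mem (show s ∈ Ioo 0 R from ⟨hs, hsR⟩)]
    · rw [indicator_of_notMem (mt mem_Iio.1 hsR),
        indicator_of_notMem fun h : s ∈ Ioo 0 R => hsR h.2,
        Real.zero_rpow (div_ne_zero hp hpb), zero_mul]
  have hint : ∫ s in Ioo 0 R, s ^ ((n : ℝ) - 1) = R ^ n / n := by
    rw [← integral_Ioc_eq_integral_Ioo, ← intervalIntegral.integral_of_le hR,
      integral_rpow (Or.inl (by linarith)), sub_add_cancel, Real.zero_rpow hn.ne', sub_zero,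
      Real.rpow_natCast]
  rw [mixedNorm, setIntegral_congr_fun measurableSet_Ioi radial,
    setIntegral_indicator measurableSet_Ioo, inter_eq_self_of_subset_right Ioo_subset_Ioi_self,
    integral_const_mul, hint, Real.mul_rpow (Real.rpow_nonneg hω _) (by positivity),
    ← Real.rpow_mul hω]
  field_simp

lemma mixedNorm_indicator_ball_pos {p pb : ℝ} (hp : p ≠ 0) (hpb : pb ≠ 0) {R : ℝ} (hR : 0 < R) :
    0 < mixedNorm n p pb ((ball (0 : Euc n) R).indicator fun _ => 1) := by
  rw [mixedNorm_indicator_ball hp hpb hR.le]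
  have hn : (0 : ℝ) < n := Nat.cast_pos.2 (NeZero.pos n)
  exact mul_pos (Real.rpow_pos_of_pos sphArea_pos _) (Real.rpow_pos_of_pos (by positivity) _)

lemma mixedNorm_indicator_ball_eq_rpow_mul {p pb pb' : ℝ} (hp : p ≠ 0) (hpb : pb ≠ 0)
    (hpb' : pb' ≠ 0) {R : ℝ} (hR : 0 ≤ R) :
    mixedNorm n p pb ((ball (0 : Euc n) R).indicator fun _ => 1)
      = sphArea n ^ (1 / pb - 1 / pb') *
          mixedNorm n p pb' ((ball (0 : Euc n) R).indicator fun _ => 1) := by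
  rw [mixedNorm_indicator_ball hp hpb hR, mixedNorm_indicator_ball hp hpb' hR, ← mul_assoc,
    ← Real.rpow_add sphArea_pos, sub_add_cancel]

lemma mixedNorm_indicator_ball_mul_rpow {p pb : ℝ} (hp : p ≠ 0) (hpb : pb ≠ 0) {R l : ℝ}
    (hR : 0 ≤ R) (hl : 0 < l) :
    mixedNorm n p pb ((ball (0 : Euc n) (R * l ^ (-1 / n : ℝ))).indicator fun _ => 1)
      = l ^ (-1 / p) * mixedNorm n p pb ((ball (0 : Euc n) R).indicator fun _ => 1) := by
  have hn : (0 : ℝ) < n := Nat.cast_pos.2 (NeZero.pos n)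
  have hpow : (R * l ^ (-1 / n : ℝ)) ^ n / n = R ^ n / n * l ^ (-1 : ℝ) := by
    rw [mul_pow, ← Real.rpow_natCast (l ^ _), ← Real.rpow_mul hl.le, div_mul_cancel₀ _ hn.ne']
    ring
  rw [mixedNorm_indicator_ball hp hpb (by positivity), mixedNorm_indicator_ball hp hpb hR, hpow,
    Real.mul_rpow (by positivity) (by positivity), ← Real.rpow_mul hl.le]
  ring_nf

lemma hardyOp_indicator_ball {r : ℝ} (hr : 0 ≤ r) {x : Euc n} (hx : x ≠ 0) :
    hardyOp n ((ball (0 : Euc n) r).indicator fun _ => 1) x = min ‖x‖ r ^ n / ‖x‖ ^ n := by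
  have hx' : 0 < ‖x‖ := norm_pos_iff.2 hx
  have hball : {y : Euc n | ‖y‖ < ‖x‖} = ball 0 ‖x‖ := by
    ext y; simp
  have hinter : ball (0 : Euc n) ‖x‖ ∩ ball 0 r = ball 0 (min ‖x‖ r) := by
    ext y; simp
  rw [hardyOp, hball, setIntegral_indicator measurableSet_ball, hinter, setIntegral_const,
    measureReal_ball_zero (le_min hx'.le hr), smul_eq_mul, mul_one]
  have hΩ := ballVol_pos n
  field_simp

lemma abs_hardyOp_indicator_ball_le_one {r : ℝ} (hr : 0 ≤ r) (x : Euc n) :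
    |hardyOp n ((ball (0 : Euc n) r).indicator fun _ => 1) x| ≤ 1 := by
  rcases eq_or_ne x 0 with rfl | hx
  · simp [hardyOp_zero]
  have hmin : 0 ≤ min ‖x‖ r := le_min (norm_nonneg x) hr
  rw [hardyOp_indicator_ball hr hx, abs_of_nonneg (div_nonneg (pow_nonneg hmin n) (by positivity)),
    div_le_one (by positivity [norm_pos_iff.2 hx])]
  exact pow_le_pow_left₀ hmin (min_le_left _ _) n

lemma lt_abs_hardyOp_indicator_ball_iff {r l : ℝ} (hr : 0 < r) (hl0 : 0 < l) (hl1 : l < 1)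
    {x : Euc n} (hx : x ≠ 0) :
    l < |hardyOp n ((ball (0 : Euc n) r).indicator fun _ => 1) x| ↔ ‖x‖ < r * l ^ (-1 / n : ℝ) := by
  have hn : (0 : ℝ) < n := Nat.cast_pos.2 (NeZero.pos n)
  have hx' : 0 < ‖x‖ := norm_pos_iff.2 hx
  have hr_lt : r < r * l ^ (-1 / n : ℝ) :=
    lt_mul_right hr <| Real.one_lt_rpow_of_pos_of_lt_one_of_neg hl0 hl1 <|
      div_neg_of_neg_of_pos (by norm_num) hn
  rw [hardyOp_indicator_ball hr.le hx]
  rcases le_or_gt ‖x‖ r with hxr | hrx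
  · rw [min_eq_left hxr, div_self (by positivity), abs_one]
    exact iff_of_true hl1 (hxr.trans_lt hr_lt)
  · have hpow : (r * l ^ (-1 / n : ℝ)) ^ n = r ^ n / l := by
      rw [mul_pow, ← Real.rpow_natCast (l ^ _), ← Real.rpow_mul hl0.le, div_mul_cancel₀ _ hn.ne',
        Real.rpow_neg_one, div_eq_mul_inv]
    rw [min_eq_right hrx.le, abs_of_nonneg (by positivity), lt_div_iff₀ (by positivity),
      ← pow_lt_pow_iff_left₀ hx'.le (by positivity) (NeZero.ne n), hpow, lt_div_iff₀ hl0, mul_comm]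

lemma mixedNorm_superlevel_hardyOp_indicator_ball {p pb r l : ℝ} (hr : 0 < r) (hl0 : 0 < l)
    (hl1 : l < 1) :
    mixedNorm n p pb
        ({x | l < |hardyOp n ((ball (0 : Euc n) r).indicator fun _ => 1) x|}.indicator fun _ => 1)
      = mixedNorm n p pb ((ball (0 : Euc n) (r * l ^ (-1 / n : ℝ))).indicator fun _ => 1) :=
  mixedNorm_congr fun x hx => by
    simp only [indicator, mem_ofPred_eq, mem_ball_zero_iff,
      lt_abs_hardyOp_indicator_ball_iff hr hl0 hl1 hx]

theorem wMixedNorm_hardyOp_indicator_ball {p pb : ℝ} (hp : 1 ≤ p) (hpb : pb ≠ 0) {r : ℝ}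
    (hr : 0 < r) :
    wMixedNorm n p pb (hardyOp n ((ball (0 : Euc n) r).indicator fun _ => 1))
      = mixedNorm n p pb ((ball (0 : Euc n) r).indicator fun _ => 1) := by
  set M := mixedNorm n p pb ((ball (0 : Euc n) r).indicator fun _ => 1)
  set level : ℝ → ℝ := fun l => l * mixedNorm n p pb
    ({x | l < |hardyOp n ((ball (0 : Euc n) r).indicator fun _ => 1) x|}.indicator fun _ => 1)
  have hp0 : p ≠ 0 := (zero_lt_one.trans_le hp).ne'
  have hM : 0 < M := mixedNorm_indicator_ball_pos hp0 hpb hr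
  have low : ∀ l, 0 < l → l < 1 → level l = l ^ (1 - 1 / p) * M := fun l hl0 hl1 => by
    simp only [level]
    rw [mixedNorm_superlevel_hardyOp_indicator_ball hr hl0 hl1,
      mixedNorm_indicator_ball_mul_rpow hp0 hpb hr.le hl0, ← mul_assoc, sub_eq_add_neg,
      Real.rpow_add hl0, Real.rpow_one, neg_div]
  have high : ∀ l, 1 ≤ l → level l = 0 := fun l hl => by
    have hempty :
        {x | l < |hardyOp n ((ball (0 : Euc n) r).indicator fun _ => 1) x|} = ball 0 0 := by
      rw [ball_zero]
      exact eq_empty_of_forall_notMem fun x hx =>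
        (abs_hardyOp_indicator_ball_le_one hr.le x).not_gt (hl.trans_lt hx)
    simp only [level]
    rw [hempty, mixedNorm_indicator_ball hp0 hpb le_rfl]
    simp [NeZero.ne n, Real.zero_rpow (inv_ne_zero hp0)]
  refine ciSup_pos_eq_of_tendsto_nhdsLT_one (g := level) (fun l hl => ?_) ?_
  · rcases lt_or_ge l 1 with hl1 | hl1
    · rw [low l hl hl1]
      exact mul_le_of_le_one_left hM.le (Real.rpow_le_one hl.le hl1.le
        (sub_nonneg.2 (div_le_one_of_le₀ hp (by linarith))))
    · rw [high l hl1]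
      exact hM.le
  · have hcont : ContinuousAt (fun l : ℝ => l ^ (1 - 1 / p) * M) 1 :=
      (Real.continuousAt_rpow_const 1 _ (Or.inl one_ne_zero)).mul continuousAt_const
    have hlim := hcont.tendsto.mono_left (nhdsWithin_le_nhds (s := Iio 1))
    rw [Real.one_rpow, one_mul] at hlim
    refine hlim.congr' ?_
    filter_upwards [Ioo_mem_nhdsLT one_pos] with l hl
    exact (low l hl.1 hl.2).symm

end Ball

/-- the characteristic function of a ball is extremal for the weak-type
estimate, and the constant ω_n^{1/p̄₂-1/p̄₁} is sharp. -/
theorem hardy_weak_sharp (n : ℕ) (hn : 2 ≤ n) (p pb1 pb2 : ℝ)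
    (hp : 1 < p) (hpb1 : 1 < pb1) (hpb2 : 1 < pb2) (r : ℝ) (hr : 0 < r) :
    wMixedNorm n p pb2 (hardyOp n (indicator (ball (0 : Euc n) r) fun _ => (1 : ℝ)))
        = sphArea n ^ (1 / pb2 - 1 / pb1) *
          mixedNorm n p pb1 (indicator (ball (0 : Euc n) r) fun _ => (1 : ℝ)) ∧
      ∀ C : ℝ, 0 ≤ C →
        (∀ f : Euc n → ℝ, (∀ x, 0 ≤ f x) → Measurable f →
          wMixedNorm n p pb2 (hardyOp n f) ≤ C * mixedNorm n p pb1 f) →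
        sphArea n ^ (1 / pb2 - 1 / pb1) ≤ C := by
  have : NeZero n := ⟨by omega⟩
  have hp0 : p ≠ 0 := (zero_lt_one.trans hp).ne'
  have hpb1' : pb1 ≠ 0 := (zero_lt_one.trans hpb1).ne'
  have hpb2' : pb2 ≠ 0 := (zero_lt_one.trans hpb2).ne'
  have hextremal := (wMixedNorm_hardyOp_indicator_ball hp.le hpb2' hr).trans
    (mixedNorm_indicator_ball_eq_rpow_mul (n := n) hp0 hpb2' hpb1' hr.le)
  refine ⟨hextremal, fun C _ hweak => ?_⟩
  have hball := hweak ((ball (0 : Euc n) r).indicator fun _ => 1)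
    (fun _ => indicator_nonneg (fun _ _ => zero_le_one) _)
    (measurable_const.indicator measurableSet_ball)
  rw [hextremal] at hball
  exact le_of_mul_le_mul_right hball (mixedNorm_indicator_ball_pos hp0 hpb1' hr)
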